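/- If p : (E,e₀) → (X,x₀) has the continuous path-covering property and H = p_#(π₁(E,e₀)), then the coset space π₁(X,x₀)/H, with the quotient topology inherited from the compact-open topology on Ω(X,x₀), is totally path-disconnected. -/

import Mathlib

/-
Lifting a loop at `p e₀` to a path starting at `e₀` and taking its endpoint gives a map from
the loop space to the fibre `p⁻¹(p e₀)`. It is continuous because path lifting is, it identifies
two loops exactly when they lie in the same coset of `p_#(π₁(E,e₀))`, and it therefore descends
to a continuous injection of the coset space into the fibre. The fibre is totally
path-disconnected, since a path in it and the constant path both lift the constant path.
Well-definedness uses that homotopic paths have lifts with the same endpoint: along a homotopy,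
the endpoints of the lifts trace a path in a fibre.
-/

open unitInterval Topology

/-- The space of paths in `X` starting at `x`, as a subspace of `C(I, X)`
with the compact-open topology. -/
abbrev PS (X : Type*) [TopologicalSpace X] (x : X) : Type _ := {f : C(I, X) // f 0 = x}

/-- The map on based path spaces induced by `p`. -/
def indMap {E X : Type*} [TopologicalSpace E] [TopologicalSpace X] (p : C(E, X)) (e : E) :
    PS E e → PS X (p e) :=
  fun α => ⟨p.comp α.1, by simp [α.2]⟩

/-- `p` has the unique path-lifting property. -/
def UniquePathLifting {E X : Type*} [TopologicalSpace E] [TopologicalSpace X]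
    (p : C(E, X)) : Prop :=
  ∀ e : E, Function.Injective (indMap p e)

/-- `p` has the path-covering property. -/
def PathCovering {E X : Type*} [TopologicalSpace E] [TopologicalSpace X]
    (p : C(E, X)) : Prop :=
  ∀ e : E, Function.Bijective (indMap p e)

/-- `p` has the continuous path-covering property. -/
def ContPathCovering {E X : Type*} [TopologicalSpace E] [TopologicalSpace X]
    (p : C(E, X)) : Prop :=
  ∀ e : E, IsHomeomorph (indMap p e)

/-- A space is totally path-disconnected if every path in it is constant. -/
def TotallyPathDisconnected (Z : Type*) [TopologicalSpace Z] : Prop :=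
  ∀ γ : C(I, Z), ∀ s t : I, γ s = γ t

/-- `p` has the homotopy lifting property with respect to `Z`. -/
def HLP {E X : Type*} [TopologicalSpace E] [TopologicalSpace X] (p : C(E, X))
    (Z : Type*) [TopologicalSpace Z] : Prop :=
  ∀ (f : C(Z, E)) (g : C(Z × I, X)), (∀ z, g (z, 0) = p (f z)) →
    ∃ G : C(Z × I, E), (∀ w, p (G w) = g w) ∧ ∀ z, G (z, 0) = f z

section PathLifting

variable {E X : Type*} [TopologicalSpace E] [TopologicalSpace X]

def Path.IsLift {a b : E} (p : E → X) (γ : Path a b) (η : I → X) : Prop :=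
  ∀ t, p (γ t) = η t

namespace Path.IsLift

variable {p : E → X} {a b c : E} {x y z : X}

theorem trans {γ : Path a b} {δ : Path b c} {η : Path x y} {θ : Path y z}
    (hγ : γ.IsLift p η) (hδ : δ.IsLift p θ) : (γ.trans δ).IsLift p (η.trans θ) := by
  intro t
  simp only [Path.trans_apply]
  split_ifs
  exacts [hγ _, hδ _]

theorem symm {γ : Path a b} {η : Path x y} (hγ : γ.IsLift p η) : γ.symm.IsLift p η.symm :=
  fun t => hγ (σ t)

theorem map_eq {p : C(E, X)} {γ : Path a b} {η : Path (p a) (p b)} (hγ : γ.IsLift p η) :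
    γ.map p.continuous = η :=
  Path.ext (funext hγ)

end Path.IsLift

theorem TotallyPathDisconnected.of_continuous_injective {Z W : Type*} [TopologicalSpace Z]
    [TopologicalSpace W] (hW : TotallyPathDisconnected W) {f : Z → W} (hf : Continuous f)
    (hinj : Function.Injective f) : TotallyPathDisconnected Z :=
  fun γ s t => hinj (hW ⟨f ∘ γ, hf.comp γ.continuous⟩ s t)

theorem TotallyPathDisconnected.quot {Z W : Type*} [TopologicalSpace Z] [TopologicalSpace W]
    (hW : TotallyPathDisconnected W) {r : Z → Z → Prop} {f : Z → W} (hf : Continuous f)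
    (hr : ∀ a b, r a b ↔ f a = f b) : TotallyPathDisconnected (Quot r) := by
  refine hW.of_continuous_injective (f := Quot.lift f fun a b => (hr a b).1)
    (continuous_quot_lift _ hf) ?_
  rintro ⟨a⟩ ⟨b⟩ hab
  exact Quot.sound ((hr a b).2 hab)

variable {p : C(E, X)}

namespace UniquePathLifting

variable (hp : UniquePathLifting p)
include hp

theorem coe_eq_of_isLift {e b b' : E} {γ : Path e b} {δ : Path e b'} {η : I → X}
    (hγ : γ.IsLift p η) (hδ : δ.IsLift p η) : ⇑γ = ⇑δ := by
  have h := @hp e ⟨γ.toContinuousMap, γ.source⟩ ⟨δ.toContinuousMap, δ.source⟩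
    (Subtype.ext <| ContinuousMap.ext fun t => (hγ t).trans (hδ t).symm)
  exact congrArg (fun c : PS E e => ⇑c.1) h

theorem target_eq_of_isLift {e b b' : E} {γ : Path e b} {δ : Path e b'} {η : I → X}
    (hγ : γ.IsLift p η) (hδ : δ.IsLift p η) : b = b' := by
  simpa using congrFun (hp.coe_eq_of_isLift hγ hδ) 1

theorem totallyPathDisconnected_fiber (x : X) : TotallyPathDisconnected (p ⁻¹' {x}) := by
  intro c s t
  let γ : Path (c 0 : E) (c 1) := ⟨⟨fun t => c t, by fun_prop⟩, rfl, rfl⟩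
  have hγ : γ.IsLift p (fun _ => x) := fun t => (c t).2
  have hconst : (Path.refl (c 0 : E)).IsLift p (fun _ => x) := fun _ => (c 0).2
  have h := hp.coe_eq_of_isLift hγ hconst
  exact Subtype.ext ((congrFun h s).trans (congrFun h t).symm)

end UniquePathLifting

theorem PathCovering.uniquePathLifting (hp : PathCovering p) : UniquePathLifting p :=
  fun e => (hp e).injective

theorem PathCovering.exists_isLift (hp : PathCovering p) {x y : X} (η : Path x y) {e : E}
    (he : p e = x) : ∃ b, ∃ γ : Path e b, γ.IsLift p η := by
  obtain ⟨γ, hγ⟩ := (hp e).surjective ⟨η.toContinuousMap, η.source.trans he.symm⟩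
  exact ⟨γ.1 1, ⟨γ.1, γ.2, rfl⟩, fun t => congrArg (fun c : PS X (p e) => c.1 t) hγ⟩

namespace ContPathCovering

variable (hp : ContPathCovering p)
include hp

theorem pathCovering : PathCovering p :=
  fun e => (hp e).bijective

noncomputable def lift (e : E) : PS X (p e) → PS E e :=
  ((hp e).homeomorph _).symm

@[fun_prop]
theorem continuous_lift (e : E) : Continuous (hp.lift e) :=
  ((hp e).homeomorph _).symm.continuous

noncomputable def liftPath (e : E) (β : PS X (p e)) : Path e ((hp.lift e β).1 1) :=
  ⟨(hp.lift e β).1, (hp.lift e β).2, rfl⟩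

theorem isLift_liftPath (e : E) (β : PS X (p e)) : (hp.liftPath e β).IsLift p β.1 := fun t =>
  congrArg (fun c : PS X (p e) => c.1 t) (((hp e).homeomorph _).apply_symm_apply β)

theorem target_eq_of_homotopic {x y : X} {η₀ η₁ : Path x y} (h : η₀.Homotopic η₁)
    {e b₀ b₁ : E} {γ₀ : Path e b₀} {γ₁ : Path e b₁} (h₀ : γ₀.IsLift p η₀)
    (h₁ : γ₁.IsLift p η₁) : b₀ = b₁ := by
  obtain ⟨F⟩ := h
  have hx : p e = x := by simpa using h₀ 0
  subst hx
  let K : I → PS X (p e) := fun s => ⟨(F.eval s).toContinuousMap, (F.eval s).source⟩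
  have hK : Continuous K := F.toContinuousMap.curry.continuous.subtype_mk _
  let c : C(I, p ⁻¹' {y}) := ⟨fun s => ⟨(hp.lift e (K s)).1 1,
      ((hp.isLift_liftPath e (K s)) 1).trans (F.eval s).target⟩,
    by fun_prop⟩
  have hc : (c 0 : E) = c 1 := congrArg Subtype.val <|
    hp.pathCovering.uniquePathLifting.totallyPathDisconnected_fiber y c 0 1
  have hK₀ : (hp.liftPath e (K 0)).IsLift p η₀ := by
    simpa [K] using hp.isLift_liftPath e (K 0)
  have hK₁ : (hp.liftPath e (K 1)).IsLift p η₁ := by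
    simpa [K] using hp.isLift_liftPath e (K 1)
  have hU := hp.pathCovering.uniquePathLifting
  exact (hU.target_eq_of_isLift h₀ hK₀).trans (hc.trans (hU.target_eq_of_isLift hK₁ h₁))

theorem exists_homotopic_map_iff {e a b : E} {α β : Path (p e) (p e)} {γα : Path e a}
    {γβ : Path e b} (hα : γα.IsLift p α) (hβ : γβ.IsLift p β) :
    (∃ γ : Path e e, (γ.map p.continuous).Homotopic (α.trans β.symm)) ↔ a = b := by
  have hU := hp.pathCovering.uniquePathLifting
  constructor
  · rintro ⟨γ, hγ⟩
    -- lift `α.trans β.symm` as `γα` followed by a lift `δ` of `β.symm`; comparing with `γ`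
    -- by homotopy invariance, `δ` ends at `e`, so `δ.symm` is the lift of `β`
    have ha : p a = p e := by simpa using hα 1
    obtain ⟨c, δ, hδ⟩ := hp.pathCovering.exists_isLift β.symm ha
    have hc : c = e := hp.target_eq_of_homotopic hγ.symm (hα.trans hδ) fun _ => rfl
    subst hc
    have hδ' : δ.symm.IsLift p β := by simpa using hδ.symm
    exact hU.target_eq_of_isLift hδ' hβ
  · rintro rfl
    refine ⟨γα.trans γβ.symm, ?_⟩
    rw [(hα.trans hβ.symm).map_eq]

end ContPathCovering

end PathLifting

theorem stmt17_general {E X : Type*} [TopologicalSpace E] [TopologicalSpace X]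
    (p : C(E, X)) (hp : ContPathCovering p) (e₀ : E) :
    TotallyPathDisconnected (Quot (fun α β : {f : C(I, X) // f 0 = p e₀ ∧ f 1 = p e₀} =>
      ∃ γ : Path e₀ e₀, (γ.map p.continuous).Homotopic
        ((⟨α.1, α.2.1, α.2.2⟩ : Path (p e₀) (p e₀)).trans
          (⟨β.1, β.2.1, β.2.2⟩ : Path (p e₀) (p e₀)).symm))) := by
  let endpoint (α : {f : C(I, X) // f 0 = p e₀ ∧ f 1 = p e₀}) : p ⁻¹' {p e₀} :=
    ⟨(hp.lift e₀ ⟨α.1, α.2.1⟩).1 1, (hp.isLift_liftPath e₀ _ 1).trans α.2.2⟩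
  have hcont : Continuous endpoint := by
    unfold endpoint
    fun_prop
  refine (hp.pathCovering.uniquePathLifting.totallyPathDisconnected_fiber (p e₀)).quot hcont
    fun α β => ?_
  rw [Subtype.ext_iff]
  exact hp.exists_homotopic_map_iff (hp.isLift_liftPath e₀ _) (hp.isLift_liftPath e₀ _)

/-- If `p : (E,e₀) → (X, x₀)` has the continuous path-covering property and
`H = p_#(π₁(E,e₀))`, then the coset space `π₁(X,x₀)/H`, realized as the quotient
of the loop space `Ω(X,x₀)` (compact-open topology) by the relation
`α ≈ β ↔ [α·β⁻] ∈ p_#(π₁(E,e₀))`, is totally path-disconnected. -/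
theorem stmt17 {E X : Type*} [TopologicalSpace E] [TopologicalSpace X] [T2Space X]
    [PathConnectedSpace X] (p : C(E, X)) (hp : ContPathCovering p) (e₀ : E) :
    TotallyPathDisconnected (Quot (fun α β : {f : C(I, X) // f 0 = p e₀ ∧ f 1 = p e₀} =>
      ∃ γ : Path e₀ e₀, (γ.map p.continuous).Homotopic
        ((⟨α.1, α.2.1, α.2.2⟩ : Path (p e₀) (p e₀)).trans
          (⟨β.1, β.2.1, β.2.2⟩ : Path (p e₀) (p e₀)).symm))) :=
  stmt17_general p hp e₀
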